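/- Let d ≥ 1 be an integer, 1 < α ≤ 2 and 0 < β ≤ d. Then every measure μ ∈ M_{α,β} is centered, i.e. μ(ℝ^d) = 0. -/

import Mathlib

/-!
If `m = μ(ℝ^d) ≠ 0`, the total variation of `μ` outside a large ball `B(0,R)` is small, so
`|μ(B(x,r))| ≥ |m|/2` whenever `B(x,r) ⊇ B(0,R)`, in particular for all `x ∈ B̄(0,r/2)` once
`r ≥ 2R`. Hence `∫ |μ(B(x,r))|^α dx ≳ r^d` for large `r`, contradicting the bound `C r^p`
since `p < β ≤ d`. For this the integral must be a genuine Bochner integral (not the junk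
value `0`): for `α ≥ 1`, `|μ(B(x,r))|^α` is dominated by a multiple of `|μ|(B(x,r))`, whose
integral in `x` is `|μ|(ℝ^d) · |B(0,r)|`.
-/

open MeasureTheory Filter Set Metric
open scoped ENNReal Topology

noncomputable section

/-- The space `M_{α,β}` of finite signed measures `μ` on `ℝ^d` such that
`∫_{ℝ^d} |μ(B(x,r))|^α dx ≤ C (r^p ∧ r^q)` for all `r > 0`, for some finite constant `C`
and exponents `0 < p < β < q`. -/
def MemM (d : ℕ) (α β : ℝ)
    (μ : MeasureTheory.SignedMeasure (EuclideanSpace ℝ (Fin d))) : Prop :=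
  ∃ C p q : ℝ, 0 < p ∧ p < β ∧ β < q ∧
    ∀ r : ℝ, 0 < r →
      (∫ x : EuclideanSpace ℝ (Fin d), |μ (Metric.ball x r)| ^ α) ≤ C * min (r ^ p) (r ^ q)

lemma Real.rpow_le_rpow_sub_one_mul {t M α : ℝ} (ht : 0 ≤ t) (htM : t ≤ M) (hα : 1 ≤ α) :
    t ^ α ≤ M ^ (α - 1) * t := by
  calc t ^ α = t ^ (α - 1) * t := by
        rw [← Real.rpow_add_one' ht (by linarith), sub_add_cancel]
    _ ≤ M ^ (α - 1) * t := by gcongr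

lemma not_eventually_mul_pow_le_mul_rpow {a C p : ℝ} {d : ℕ} (ha : 0 < a) (hpd : p < d) :
    ¬ ∀ᶠ r in atTop, a * r ^ d ≤ C * r ^ p := by
  intro h
  have hgrowth : Tendsto (fun r : ℝ => a * r ^ ((d : ℝ) - p)) atTop atTop :=
    (tendsto_rpow_atTop (sub_pos.2 hpd)).const_mul_atTop ha
  obtain ⟨r, hle, hgt, hr⟩ :=
    (h.and ((hgrowth.eventually_gt_atTop C).and (eventually_gt_atTop 0))).exists
  have hsplit : a * r ^ d = a * r ^ ((d : ℝ) - p) * r ^ p := by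
    rw [mul_assoc, ← Real.rpow_add hr, sub_add_cancel, Real.rpow_natCast]
  exact (mul_lt_mul_of_pos_right hgt (Real.rpow_pos_of_pos hr p)).not_ge (hsplit ▸ hle)

namespace MeasureTheory

section Tail

variable {X : Type*} [PseudoMetricSpace X] [MeasurableSpace X] [OpensMeasurableSpace X]

lemma Measure.tendsto_measure_compl_ball_atTop (ν : Measure X) [IsFiniteMeasure ν] (a : X) :
    Tendsto (fun R : ℝ => ν (ball a R)ᶜ) atTop (𝓝 0) := by
  have hlim := tendsto_measure_iInter_atTop (μ := ν) (s := fun R : ℝ => (ball a R)ᶜ)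
    (fun _ => measurableSet_ball.compl.nullMeasurableSet)
    (fun _ _ h => compl_subset_compl.2 (ball_subset_ball h)) ⟨0, measure_ne_top _ _⟩
  have hcover : ⋃ R : ℝ, ball a R = univ :=
    iUnion_eq_univ_iff.2 fun y => ⟨dist y a + 1, by simp⟩
  rwa [← compl_iUnion, hcover, compl_univ, measure_empty] at hlim

lemma SignedMeasure.exists_abs_sub_apply_le_of_ball_subset (μ : SignedMeasure X) (a : X)
    {ε : ℝ} (hε : 0 < ε) :
    ∃ R : ℝ, ∀ s, MeasurableSet s → ball a R ⊆ s → |μ univ - μ s| ≤ ε := by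
  obtain ⟨R, hR⟩ := ((μ.totalVariation.tendsto_measure_compl_ball_atTop a).eventually
    (gt_mem_nhds (ENNReal.ofReal_pos.2 hε))).exists
  refine ⟨R, fun s hs hRs => ?_⟩
  calc |μ univ - μ s| = ‖μ sᶜ‖ := by rw [VectorMeasure.of_compl hs, Real.norm_eq_abs]
    _ ≤ μ.totalVariation.real sᶜ := μ.norm_le_totalVariation _
    _ ≤ μ.totalVariation.real (ball a R)ᶜ := measureReal_mono (compl_subset_compl.2 hRs)
    _ ≤ ε := ENNReal.toReal_le_of_le_ofReal hε.le hR.le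

end Tail

section BallsAsFunctionsOfTheCenter

variable {X : Type*} [PseudoMetricSpace X] [MeasurableSpace X] [OpensMeasurableSpace X]
  [SecondCountableTopology X]

lemma measurableSet_setOf_dist_lt (r : ℝ) : MeasurableSet {p : X × X | dist p.2 p.1 < r} :=
  measurableSet_lt (measurable_dist.comp measurable_swap) measurable_const

lemma Measure.measurable_measure_ball (ν : Measure X) [SFinite ν] (r : ℝ) :
    Measurable fun x => ν (ball x r) :=
  measurable_measure_prodMk_left (measurableSet_setOf_dist_lt r)

lemma Measure.lintegral_measure_ball_comm (ρ ν : Measure X) [SFinite ρ] [SFinite ν] (r : ℝ) :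
    ∫⁻ x, ν (ball x r) ∂ρ = ∫⁻ y, ρ (ball y r) ∂ν := by
  have hS := measurableSet_setOf_dist_lt (X := X) r
  calc ∫⁻ x, ν (ball x r) ∂ρ = ρ.prod ν {p | dist p.2 p.1 < r} :=
        (Measure.prod_apply hS).symm
    _ = ∫⁻ y, ρ (ball y r) ∂ν := by
      rw [Measure.prod_apply_symm hS]
      congr with y
      congr 1 with x
      simp [dist_comm]

lemma SignedMeasure.measurable_apply_ball (μ : SignedMeasure X) (r : ℝ) :
    Measurable fun x => μ (ball x r) := by
  simp_rw [μ.apply_eq_posPart_real_sub_negPart_real measurableSet_ball, measureReal_def]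
  exact (μ.toJordanDecomposition.posPart.measurable_measure_ball r).ennreal_toReal.sub
    (μ.toJordanDecomposition.negPart.measurable_measure_ball r).ennreal_toReal

end BallsAsFunctionsOfTheCenter

section Haar

variable {E : Type*} [NormedAddCommGroup E] [MeasurableSpace E] [BorelSpace E] [ProperSpace E]
  (ρ : Measure E) [ρ.IsAddHaarMeasure]

lemma Measure.lintegral_measure_ball_addHaar (ν : Measure E) [SFinite ν] (r : ℝ) :
    ∫⁻ x, ν (ball x r) ∂ρ = ν univ * ρ (ball 0 r) := by
  simp_rw [Measure.lintegral_measure_ball_comm ρ ν r, Measure.addHaar_ball_center ρ,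
    lintegral_const, mul_comm]

lemma Measure.integrable_measureReal_ball (ν : Measure E) [IsFiniteMeasure ν] (r : ℝ) :
    Integrable (fun x => ν.real (ball x r)) ρ :=
  integrable_toReal_of_lintegral_ne_top (ν.measurable_measure_ball r).aemeasurable (by
    rw [Measure.lintegral_measure_ball_addHaar ρ ν r]
    exact ENNReal.mul_ne_top (measure_ne_top _ _) measure_ball_lt_top.ne)

lemma SignedMeasure.integrable_abs_apply_ball_rpow (μ : SignedMeasure E) (r : ℝ) {α : ℝ}
    (hα : 1 ≤ α) : Integrable (fun x => |μ (ball x r)| ^ α) ρ := by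
  set ν := μ.totalVariation
  refine ((Measure.integrable_measureReal_ball ρ ν r).const_mul (ν.real univ ^ (α - 1))).mono'
    ((μ.measurable_apply_ball r).abs.pow_const α).aestronglyMeasurable (ae_of_all _ fun x => ?_)
  have hle : |μ (ball x r)| ≤ ν.real (ball x r) := μ.norm_le_totalVariation _
  rw [Real.norm_eq_abs, abs_of_nonneg (by positivity)]
  calc |μ (ball x r)| ^ α ≤ ν.real univ ^ (α - 1) * |μ (ball x r)| :=
        Real.rpow_le_rpow_sub_one_mul (abs_nonneg _)
          (hle.trans (measureReal_mono (subset_univ _))) hα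
    _ ≤ ν.real univ ^ (α - 1) * ν.real (ball x r) := by gcongr

lemma SignedMeasure.eventually_le_integral_abs_apply_ball_rpow (μ : SignedMeasure E)
    (hm : μ univ ≠ 0) {α : ℝ} (hα : 1 ≤ α) :
    ∀ᶠ r in atTop, (|μ univ| / 2) ^ α * ρ.real (closedBall 0 (r / 2)) ≤
      ∫ x, |μ (ball x r)| ^ α ∂ρ := by
  have hε : 0 < |μ univ| / 2 := half_pos (abs_pos.2 hm)
  obtain ⟨R, hR⟩ := μ.exists_abs_sub_apply_le_of_ball_subset 0 hε
  filter_upwards [eventually_ge_atTop (2 * R)] with r hRr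
  have hint := μ.integrable_abs_apply_ball_rpow ρ r hα
  have hlow : ∀ x ∈ closedBall 0 (r / 2), (|μ univ| / 2) ^ α ≤ |μ (ball x r)| ^ α := by
    intro x hx
    have hx' : dist 0 x ≤ r / 2 := by rw [dist_comm]; exact hx
    have := hR (ball x r) measurableSet_ball (ball_subset_ball' (by linarith))
    have := abs_sub_abs_le_abs_sub (μ univ) (μ (ball x r))
    exact Real.rpow_le_rpow hε.le (by linarith) (by linarith)
  calc (|μ univ| / 2) ^ α * ρ.real (closedBall 0 (r / 2))
      ≤ ∫ x in closedBall 0 (r / 2), |μ (ball x r)| ^ α ∂ρ :=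
        setIntegral_ge_of_const_le_real measurableSet_closedBall measure_closedBall_lt_top.ne
          hlow hint.integrableOn
    _ ≤ ∫ x, |μ (ball x r)| ^ α ∂ρ :=
        setIntegral_le_integral hint (ae_of_all _ fun _ => by positivity)

end Haar

end MeasureTheory

theorem statement5_general (d : ℕ) (α β : ℝ) (hα1 : 1 < α) (hβ2 : β ≤ (d : ℝ))
    (μ : MeasureTheory.SignedMeasure (EuclideanSpace ℝ (Fin d))) (hμ : MemM d α β μ) :
    μ Set.univ = 0 := by
  obtain ⟨C, p, q, -, hpβ, hβq, hbound⟩ := hμ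
  by_contra hm
  have hunit : 0 < volume.real (ball (0 : EuclideanSpace ℝ (Fin d)) 1) :=
    ENNReal.toReal_pos (measure_ball_pos _ _ one_pos).ne' measure_ball_lt_top.ne
  refine not_eventually_mul_pow_le_mul_rpow (C := C)
    (a := (|μ univ| / 2) ^ α * (volume.real (ball (0 : EuclideanSpace ℝ (Fin d)) 1) / 2 ^ d))
    (by positivity) (hpβ.trans_le hβ2) ?_
  filter_upwards [μ.eventually_le_integral_abs_apply_ball_rpow volume hm hα1.le,
    eventually_ge_atTop 1] with r hlow hr
  calc _ = (|μ univ| / 2) ^ α *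
        volume.real (closedBall (0 : EuclideanSpace ℝ (Fin d)) (r / 2)) := by
        rw [Measure.addHaar_real_closedBall _ _ (by positivity), finrank_euclideanSpace_fin,
          div_pow]
        ring
    _ ≤ ∫ x, |μ (ball x r)| ^ α := hlow
    _ ≤ C * min (r ^ p) (r ^ q) := hbound r (by linarith)
    _ = C * r ^ p := by rw [min_eq_left (Real.rpow_le_rpow_of_exponent_le hr (hpβ.trans hβq).le)]

/-- if `0 < β ≤ d`, every `μ ∈ M_{α,β}` is centered: `μ(ℝ^d) = 0`. -/
theorem statement5 (d : ℕ) (hd : 1 ≤ d) (α β : ℝ) (hα1 : 1 < α) (hα2 : α ≤ 2)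
    (hβ1 : 0 < β) (hβ2 : β ≤ (d : ℝ))
    (μ : MeasureTheory.SignedMeasure (EuclideanSpace ℝ (Fin d))) (hμ : MemM d α β μ) :
    μ Set.univ = 0 :=
  statement5_general d α β hα1 hβ2 μ hμ
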